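/- Let V be a vector space over any field k and let D(V) be the Weyl algebra, i.e., the quotient of T(V ⊕ V^*) by the relations [v,w] = 0 for v,w ∈ V, [f,g] = 0 for f,g ∈ V^*, and [f,v] = f(v) for f ∈ V^*, v ∈ V. Then with the filtration deg V = 1, deg V^* = 0, the natural surjection S(V ⊕ V^*) → gr D(V) is an isomorphism. -/

import Mathlib

/-!
Both `D(V)` and `S(V ⊕ V^*)` are quotients of `T(V ⊕ V^*)`, so each direction of the claim
follows from an action `ρ` of one quotient on the other, `M`, such that every
`t ∈ filtT k V (n + 1)` acts as left multiplication by its image in `M` plus an operator of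
filtration degree `≤ n`. Applying `ρ t` to `1` then gives a representative of the image of `t`
in `M` modulo its `n`-th filtration step which depends only on the image of `t` in the acting
algebra.

`D(V)` acts on `S(V ⊕ V^*)` with `f ∈ V^*` acting by multiplication and `v ∈ V` by multiplication
minus the derivation `∂_v`; `S(V ⊕ V^*)` acts on `D(V)` with `f` acting by left and `v` by right
multiplication. In both cases the correction to left multiplication by `v` (`-∂_v`, resp. `[·, v]`)
is a derivation that does not raise the `V`-degree of the generators, hence of anything.
-/

open TensorProduct

noncomputable section

variable (k : Type) [Field k] (V : Type) [AddCommGroup V] [Module k V]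

/-- The tensor algebra on `V ⊕ V^*`. -/
abbrev TVD := TensorAlgebra k (V × Module.Dual k V)

/-- The generator of `T(V ⊕ V^*)` corresponding to `v ∈ V`. -/
def genV (v : V) : TVD k V := TensorAlgebra.ι k (v, 0)

/-- The generator of `T(V ⊕ V^*)` corresponding to `f ∈ V^*`. -/
def genD (f : Module.Dual k V) : TVD k V := TensorAlgebra.ι k (0, f)

/-- The defining relations of the Weyl algebra `D(V)`:
`[v,w] = 0`, `[f,g] = 0`, `[f,v] = f(v)`. -/
def weylRel : TVD k V → TVD k V → Prop := fun a b =>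
  (∃ v w : V, a = genV k V v * genV k V w ∧ b = genV k V w * genV k V v) ∨
  (∃ f g : Module.Dual k V, a = genD k V f * genD k V g ∧ b = genD k V g * genD k V f) ∨
  (∃ (f : Module.Dual k V) (v : V),
    a = genD k V f * genV k V v ∧
    b = genV k V v * genD k V f + algebraMap k (TVD k V) (f v))

/-- The Weyl algebra `D(V)` of (crystalline) differential operators on `V`. -/
abbrev WeylAlg := RingQuot (weylRel k V)

/-- The defining relations of the symmetric algebra `S(V ⊕ V^*)`. -/
def symRelW : TVD k V → TVD k V → Prop := fun a b =>
  ∃ x y : V × Module.Dual k V,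
    a = TensorAlgebra.ι k x * TensorAlgebra.ι k y ∧
    b = TensorAlgebra.ι k y * TensorAlgebra.ι k x

/-- The symmetric algebra `S(V ⊕ V^*)`. -/
abbrev SymVD := RingQuot (symRelW k V)

/-- The filtration of `T(V ⊕ V^*)` with `deg V = 1`, `deg V^* = 0`: `G n` is the
span of words containing at most `n` letters from `V`. -/
def filtT : ℕ → Submodule k (TVD k V)
  | 0 => Subalgebra.toSubmodule (Algebra.adjoin k (Set.range (genD k V)))
  | (n+1) => filtT n ⊔
      filtT n * (Submodule.span k (Set.range (genV k V)) *
        Subalgebra.toSubmodule (Algebra.adjoin k (Set.range (genD k V))))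

/-- The induced filtration on the Weyl algebra `D(V)`. -/
def filtW (n : ℕ) : Submodule k (WeylAlg k V) :=
  Submodule.map (RingQuot.mkAlgHom k (weylRel k V)).toLinearMap (filtT k V n)

/-- The induced filtration on `S(V ⊕ V^*)` (by degree in `V`). -/
def filtS (n : ℕ) : Submodule k (SymVD k V) :=
  Submodule.map (RingQuot.mkAlgHom k (symRelW k V)).toLinearMap (filtT k V n)

section

variable {k V}

theorem genV_eq (v : V) :
    genV k V v = (TensorAlgebra.ι k ∘ₗ LinearMap.inl k V (Module.Dual k V)) v :=
  rfl

theorem genD_eq (f : Module.Dual k V) :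
    genD k V f = (TensorAlgebra.ι k ∘ₗ LinearMap.inr k V (Module.Dual k V)) f :=
  rfl

theorem genV_zero : genV k V 0 = 0 := by
  rw [genV_eq, map_zero]

theorem genD_zero : genD k V 0 = 0 := by
  rw [genD_eq, map_zero]

theorem one_mem_filtT_zero : (1 : TVD k V) ∈ filtT k V 0 :=
  one_mem (Algebra.adjoin k _)

theorem filtT_zero_mul_self : filtT k V 0 * filtT k V 0 = filtT k V 0 :=
  Subalgebra.isIdempotentElem_toSubmodule _

theorem filtT_succ (n : ℕ) : filtT k V (n + 1) =
    filtT k V n ⊔ filtT k V n * (Submodule.span k (Set.range (genV k V)) * filtT k V 0) :=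
  rfl

theorem filtT_mono : Monotone (filtT k V) :=
  monotone_nat_of_le_succ fun _ => le_sup_left

theorem filtT_succ_le {n : ℕ} {N : Submodule k (TVD k V)} (hN : filtT k V n ≤ N)
    (hmul : ∀ a ∈ filtT k V n, ∀ v, ∀ d ∈ filtT k V 0, a * (genV k V v * d) ∈ N) :
    filtT k V (n + 1) ≤ N := by
  refine sup_le hN (Submodule.mul_le.2 fun a ha y hy => ?_)
  refine Submodule.mul_induction_on hy (fun s hs d hd => ?_) fun y z hy hz => ?_
  · have hspan : Submodule.span k (Set.range (genV k V)) ≤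
        N.comap (LinearMap.mulLeft k a ∘ₗ LinearMap.mulRight k d) :=
      Submodule.span_le.2 (Set.range_subset_iff.2 fun v => hmul a ha v d hd)
    exact hspan hs
  · rw [mul_add]; exact add_mem hy hz

theorem filtT_succ_induction {n : ℕ} {C : TVD k V → Prop} (hC : ∀ t ∈ filtT k V n, C t)
    (hmul : ∀ a ∈ filtT k V n, ∀ v, ∀ d ∈ filtT k V 0, C (a * (genV k V v * d)))
    (hadd : ∀ x y, C x → C y → C (x + y)) (hsmul : ∀ (c : k) x, C x → C (c • x)) :
    ∀ t ∈ filtT k V (n + 1), C t :=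
  filtT_succ_le (N := ⟨⟨⟨C, hadd _ _⟩, hC 0 (zero_mem _)⟩, hsmul⟩) hC hmul

theorem genV_mem_filtT_one (v : V) : genV k V v ∈ filtT k V 1 := by
  rw [← mul_one (genV k V v), ← one_mul (genV k V v * 1)]
  exact Submodule.mem_sup_right (Submodule.mul_mem_mul one_mem_filtT_zero
    (Submodule.mul_mem_mul (Submodule.subset_span ⟨v, rfl⟩) one_mem_filtT_zero))

theorem filtT_mul_filtT_zero (n : ℕ) : filtT k V n * filtT k V 0 ≤ filtT k V n := by
  induction n with
  | zero => exact filtT_zero_mul_self.le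
  | succ n ih =>
    rw [filtT_succ, Submodule.sup_mul, mul_assoc, mul_assoc, filtT_zero_mul_self]
    exact sup_le_sup_right ih _

theorem filtT_mul (n m : ℕ) : filtT k V n * filtT k V m ≤ filtT k V (n + m) := by
  induction m with
  | zero => exact filtT_mul_filtT_zero n
  | succ m ih =>
    rw [filtT_succ, Submodule.mul_sup, ← mul_assoc, ← add_assoc, filtT_succ]
    exact sup_le_sup ih (mul_le_mul_left ih _)

section FiltImage

variable {M : Type*} [Ring M] [Algebra k M] (π : TVD k V →ₐ[k] M)

def filtImage (n : ℕ) : Submodule k M :=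
  (filtT k V n).map π.toLinearMap

variable {π}

theorem map_mem_filtImage {n : ℕ} {t : TVD k V} (ht : t ∈ filtT k V n) :
    π t ∈ filtImage π n :=
  Submodule.mem_map_of_mem ht

theorem filtImage_mono : Monotone (filtImage π) :=
  fun _ _ h => Submodule.map_mono (filtT_mono h)

theorem mul_mem_filtImage {n m : ℕ} {a b : M} (ha : a ∈ filtImage π n)
    (hb : b ∈ filtImage π m) : a * b ∈ filtImage π (n + m) := by
  have hle : filtImage π n * filtImage π m ≤ filtImage π (n + m) := by
    rw [filtImage, filtImage, ← Submodule.map_mul]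
    exact Submodule.map_mono (filtT_mul n m)
  exact hle (Submodule.mul_mem_mul ha hb)

theorem algebraMap_mem_filtImage_zero (c : k) : algebraMap k M c ∈ filtImage π 0 := by
  simpa using map_mem_filtImage (π := π) (n := 0) (algebraMap_mem (Algebra.adjoin k _) c)

theorem map_le_filtImage_of_leibniz (δ : M →ₗ[k] M)
    (hδ : ∀ a b, δ (a * b) = a * δ b + δ a * b)
    (hV : ∀ w, δ (π (genV k V w)) ∈ filtImage π 1)
    (hD : ∀ f, δ (π (genD k V f)) ∈ filtImage π 0) (n : ℕ) :
    (filtImage π n).map δ ≤ filtImage π n := by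
  suffices h : filtT k V n ≤ (filtImage π n).comap (δ ∘ₗ π.toLinearMap) by
    rw [filtImage, Submodule.map_le_iff_le_comap, Submodule.map_le_iff_le_comap]
    exact h
  have h0 : filtT k V 0 ≤ (filtImage π 0).comap (δ ∘ₗ π.toLinearMap) := by
    intro t ht
    induction ht using Algebra.adjoin_induction with
    | mem x hx => obtain ⟨f, rfl⟩ := hx; exact hD f
    | algebraMap c =>
      have hδ1 : δ 1 = 0 := by simpa using hδ 1 1
      simp [Algebra.algebraMap_eq_smul_one, hδ1]
    | add x y _ _ hx hy => simpa using add_mem hx hy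
    | mul x y hx' hy' hx hy =>
      simpa [hδ] using add_mem (mul_mem_filtImage (map_mem_filtImage hx') hy)
        (mul_mem_filtImage hx (map_mem_filtImage hy'))
  induction n with
  | zero => exact h0
  | succ n ih =>
    refine filtT_succ_le (ih.trans fun t ht => filtImage_mono n.le_succ ht) fun a ha w d hd => ?_
    have hw := map_mem_filtImage (π := π) (genV_mem_filtT_one w)
    have h1 : π (genV k V w) * δ (π d) ∈ filtImage π 1 := by
      simpa using mul_mem_filtImage hw (h0 hd)
    have h2 : δ (π (genV k V w)) * π d ∈ filtImage π 1 := by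
      simpa using mul_mem_filtImage (hV w) (map_mem_filtImage hd)
    have h3 : π (genV k V w) * π d ∈ filtImage π 1 := by
      simpa using mul_mem_filtImage hw (map_mem_filtImage hd)
    simp only [Submodule.mem_comap, LinearMap.comp_apply, AlgHom.toLinearMap_apply, map_mul, hδ]
    exact add_mem (mul_mem_filtImage (map_mem_filtImage ha) (add_mem h1 h2))
      (mul_mem_filtImage (ih ha) h3)

theorem action_eq_lmul_of_mem_filtT_zero (ρ : TVD k V →ₐ[k] Module.End k M)
    (hD : ∀ f, ρ (genD k V f) = Algebra.lmul k M (π (genD k V f)))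
    {t : TVD k V} (ht : t ∈ filtT k V 0) : ρ t = Algebra.lmul k M (π t) :=
  (AlgHom.eqOn_adjoin_iff (φ := ρ) (ψ := (Algebra.lmul k M).comp π)).2
    (by rintro _ ⟨f, rfl⟩; exact hD f) ht

theorem action_sub_mul_mem_filtImage (ρ : TVD k V →ₐ[k] Module.End k M)
    (hD : ∀ f, ρ (genD k V f) = Algebra.lmul k M (π (genD k V f)))
    (hV : ∀ v m, ∀ u ∈ filtImage π m, ρ (genV k V v) u - π (genV k V v) * u ∈ filtImage π m)
    (n : ℕ) : ∀ t ∈ filtT k V n, ∀ m, ∀ u ∈ filtImage π m,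
      ρ t u - π t * u ∈ filtImage π (n + m - 1) := by
  induction n with
  | zero =>
    intro t ht m u _
    simp [action_eq_lmul_of_mem_filtT_zero ρ hD ht]
  | succ n ih =>
    refine filtT_succ_induction (fun t ht m u hu => filtImage_mono (by omega) (ih t ht m u hu))
      (fun a ha v d hd m u hu => ?_) (fun x y hx hy m u hu => ?_) fun c x hx m u hu => ?_
    · have hdu : π d * u ∈ filtImage π m := by
        simpa using mul_mem_filtImage (map_mem_filtImage hd) hu
      have hv := hV v m _ hdu
      have hvdu : ρ (genV k V v) (π d * u) ∈ filtImage π (m + 1) := by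
        have := mul_mem_filtImage (map_mem_filtImage (π := π) (genV_mem_filtT_one v)) hdu
        rw [add_comm 1 m] at this
        simpa using add_mem (filtImage_mono m.le_succ hv) this
      have ha' := ih a ha (m + 1) _ hvdu
      rw [show n + (m + 1) - 1 = n + m by omega] at ha'
      rw [show n + 1 + m - 1 = n + m by omega]
      have hrw : ρ (a * (genV k V v * d)) u - π (a * (genV k V v * d)) * u =
          (ρ a (ρ (genV k V v) (π d * u)) - π a * ρ (genV k V v) (π d * u)) +
            π a * (ρ (genV k V v) (π d * u) - π (genV k V v) * (π d * u)) := by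
        simp only [map_mul, Module.End.mul_apply, action_eq_lmul_of_mem_filtT_zero ρ hD hd,
          Algebra.coe_lmul_eq_mul, LinearMap.mul_apply', mul_sub, mul_assoc]
        abel
      rw [hrw]
      exact add_mem ha' (mul_mem_filtImage (map_mem_filtImage ha) hv)
    · simpa [add_mul, add_sub_add_comm] using add_mem (hx m u hu) (hy m u hu)
    · simpa [smul_sub] using Submodule.smul_mem _ c (hx m u hu)

theorem action_one_sub_mem_filtImage (ρ : TVD k V →ₐ[k] Module.End k M)
    (hD : ∀ f, ρ (genD k V f) = Algebra.lmul k M (π (genD k V f)))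
    (hV : ∀ v m, ∀ u ∈ filtImage π m, ρ (genV k V v) u - π (genV k V v) * u ∈ filtImage π m)
    {n : ℕ} {t : TVD k V} (ht : t ∈ filtT k V (n + 1)) : ρ t 1 - π t ∈ filtImage π n := by
  simpa using action_sub_mul_mem_filtImage ρ hD hV (n + 1) t ht 0 1
    (by simpa using map_mem_filtImage (π := π) one_mem_filtT_zero)

theorem mem_filtImage_of_action {M' : Type*} [Ring M'] [Algebra k M']
    {π' : TVD k V →ₐ[k] M'} (ρ : M' →ₐ[k] Module.End k M)
    (hD : ∀ f, ρ (π' (genD k V f)) = Algebra.lmul k M (π (genD k V f)))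
    (hV : ∀ v m, ∀ u ∈ filtImage π m,
      ρ (π' (genV k V v)) u - π (genV k V v) * u ∈ filtImage π m)
    {n : ℕ} {x : TVD k V} (hx : x ∈ filtT k V (n + 1)) (h : π' x ∈ filtImage π' n) :
    π x ∈ filtImage π n := by
  obtain ⟨y, hy, hyx⟩ := h
  have hx' := action_one_sub_mem_filtImage (ρ.comp π') hD hV hx
  have hy' := action_one_sub_mem_filtImage (ρ.comp π') hD hV (filtT_mono n.le_succ hy)
  have hxy : π x = π y + (ρ (π' y) 1 - π y) - (ρ (π' x) 1 - π x) := by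
    rw [show π' y = π' x from hyx]; abel
  rw [hxy]
  exact sub_mem (add_mem (map_mem_filtImage hy) hy') hx'

end FiltImage

local notation "πS" => RingQuot.mkAlgHom k (symRelW k V)
local notation "πW" => RingQuot.mkAlgHom k (weylRel k V)

section Symmetric

open TrivSqZeroExt

theorem symVD_ι_mul_comm (x y : V × Module.Dual k V) :
    πS (TensorAlgebra.ι k x) * πS (TensorAlgebra.ι k y) =
      πS (TensorAlgebra.ι k y) * πS (TensorAlgebra.ι k x) := by
  simpa using RingQuot.mkAlgHom_rel k (s := symRelW k V) ⟨x, y, rfl, rfl⟩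

theorem symVD_ι_mul_left_comm (x y : V × Module.Dual k V) (u : SymVD k V) :
    πS (TensorAlgebra.ι k x) * (πS (TensorAlgebra.ι k y) * u) =
      πS (TensorAlgebra.ι k y) * (πS (TensorAlgebra.ι k x) * u) := by
  rw [← mul_assoc, symVD_ι_mul_comm, mul_assoc]

def symJetGen : (V × Module.Dual k V) →ₗ[k] TrivSqZeroExt (SymVD k V) (V →ₗ[k] SymVD k V) where
  toFun x := inl (πS (TensorAlgebra.ι k x)) + inr (Algebra.linearMap k (SymVD k V) ∘ₗ x.2)
  map_add' x y := by
    simp only [map_add, Prod.snd_add, LinearMap.comp_add, inl_add, inr_add]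
    abel
  map_smul' c x := by
    ext
    · simp
    · simp [Algebra.smul_def, algebraMap_eq_inl']

/-- `a ↦ a + ε da`: an algebra map into a square-zero extension is the same thing as a
derivation, here `da v = ∂_v a` with `∂_v w = 0` and `∂_v f = f v`. -/
def symJet : SymVD k V →ₐ[k] TrivSqZeroExt (SymVD k V) (V →ₗ[k] SymVD k V) :=
  RingQuot.liftAlgHom k ⟨TensorAlgebra.lift k symJetGen, by
    rintro _ _ ⟨x, y, rfl, rfl⟩
    ext v
    · simpa [symJetGen] using symVD_ι_mul_comm x y
    · simp [symJetGen, Algebra.commutes, add_comm]⟩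

theorem symJet_mk_ι (x : V × Module.Dual k V) :
    symJet (πS (TensorAlgebra.ι k x)) =
      inl (πS (TensorAlgebra.ι k x)) + inr (Algebra.linearMap k (SymVD k V) ∘ₗ x.2) := by
  simp [symJet, symJetGen]

theorem fst_symJet (a : SymVD k V) : (symJet a).fst = a := by
  have h : (fstHom k _ _).comp symJet = AlgHom.id k (SymVD k V) := by
    ext x <;> simp [symJet_mk_ι]
  exact AlgHom.congr_fun h a

def symPartial : V →ₗ[k] Module.End k (SymVD k V) :=
  ((sndHom (SymVD k V) (V →ₗ[k] SymVD k V)).restrictScalars k ∘ₗ symJet.toLinearMap).flip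

theorem symPartial_apply (v : V) (a : SymVD k V) : symPartial v a = (symJet a).snd v :=
  rfl

theorem symPartial_mul (v : V) (a b : SymVD k V) :
    symPartial v (a * b) = a * symPartial v b + symPartial v a * b := by
  simp [symPartial_apply, snd_mul, fst_symJet]

theorem symPartial_mk_ι (v : V) (x : V × Module.Dual k V) :
    symPartial v (πS (TensorAlgebra.ι k x)) = algebraMap k (SymVD k V) (x.2 v) := by
  simp [symPartial_apply, symJet_mk_ι]

theorem symPartial_algebraMap (v : V) (c : k) :
    symPartial v (algebraMap k (SymVD k V) c) = 0 := by
  simp [symPartial_apply, algebraMap_eq_inl']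

theorem symPartial_comm (v w : V) (a : SymVD k V) :
    symPartial v (symPartial w a) = symPartial w (symPartial v a) := by
  obtain ⟨t, rfl⟩ := RingQuot.mkAlgHom_surjective k (symRelW k V) a
  induction t using TensorAlgebra.induction with
  | algebraMap c => simp [symPartial_algebraMap]
  | ι x => simp [symPartial_mk_ι, symPartial_algebraMap]
  | add a b ha hb => simp [ha, hb]
  | mul a b ha hb =>
    simp only [map_mul, symPartial_mul, map_add, ha, hb]
    abel

def weylActionOnSymGen : (V × Module.Dual k V) →ₗ[k] Module.End k (SymVD k V) where
  toFun x := Algebra.lmul k (SymVD k V) (πS (TensorAlgebra.ι k x)) - symPartial x.1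
  map_add' x y := by
    ext u
    simp only [map_add, Prod.fst_add, LinearMap.sub_apply, LinearMap.add_apply]
    abel
  map_smul' c x := by
    ext u
    simp [smul_sub]

theorem weylActionOnSymGen_apply (x : V × Module.Dual k V) (u : SymVD k V) :
    weylActionOnSymGen x u = πS (TensorAlgebra.ι k x) * u - symPartial x.1 u :=
  rfl

def weylActionOnSym : WeylAlg k V →ₐ[k] Module.End k (SymVD k V) :=
  RingQuot.liftAlgHom k ⟨TensorAlgebra.lift k weylActionOnSymGen, by
    rintro _ _ (⟨v, w, rfl, rfl⟩ | ⟨f, g, rfl, rfl⟩ | ⟨f, v, rfl, rfl⟩) <;> ext u <;>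
      simp only [genV, genD, map_mul, map_add, map_sub, map_zero, TensorAlgebra.lift_ι_apply,
        AlgHom.commutes, Module.End.mul_apply, Module.algebraMap_end_apply, LinearMap.add_apply,
        LinearMap.zero_apply, weylActionOnSymGen_apply, symPartial_mul, symPartial_mk_ι,
        zero_mul, add_zero, sub_zero]
    · rw [symVD_ι_mul_left_comm, symPartial_comm]
      abel
    · exact symVD_ι_mul_left_comm _ _ u
    · rw [symVD_ι_mul_left_comm, Algebra.smul_def]
      abel⟩

theorem weylActionOnSym_mk_genD (f : Module.Dual k V) :
    weylActionOnSym (πW (genD k V f)) = Algebra.lmul k (SymVD k V) (πS (genD k V f)) := by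
  ext u
  simp [weylActionOnSym, genD, weylActionOnSymGen_apply]

theorem weylActionOnSym_mk_genV_sub_mem (v : V) (m : ℕ) (u : SymVD k V)
    (hu : u ∈ filtImage πS m) :
    weylActionOnSym (πW (genV k V v)) u - πS (genV k V v) * u ∈ filtImage πS m := by
  have h : weylActionOnSym (πW (genV k V v)) u - πS (genV k V v) * u = -symPartial v u := by
    simp [weylActionOnSym, genV, weylActionOnSymGen_apply]
  rw [h]
  refine neg_mem (map_le_filtImage_of_leibniz (symPartial v) (symPartial_mul v) (fun w => ?_)
    (fun f => ?_) m (Submodule.mem_map_of_mem hu))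
  · simp [genV, symPartial_mk_ι]
  · simpa [genD, symPartial_mk_ι] using algebraMap_mem_filtImage_zero (f v)

end Symmetric

section Weyl

theorem weyl_genV_mul_comm (v w : V) :
    πW (genV k V v) * πW (genV k V w) = πW (genV k V w) * πW (genV k V v) := by
  simpa using RingQuot.mkAlgHom_rel k (s := weylRel k V) (Or.inl ⟨v, w, rfl, rfl⟩)

theorem weyl_genD_mul_comm (f g : Module.Dual k V) :
    πW (genD k V f) * πW (genD k V g) = πW (genD k V g) * πW (genD k V f) := by
  simpa using RingQuot.mkAlgHom_rel k (s := weylRel k V) (Or.inr (Or.inl ⟨f, g, rfl, rfl⟩))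

theorem weyl_genD_mul_genV (f : Module.Dual k V) (v : V) :
    πW (genD k V f) * πW (genV k V v) =
      πW (genV k V v) * πW (genD k V f) + algebraMap k (WeylAlg k V) (f v) := by
  simpa using RingQuot.mkAlgHom_rel k (s := weylRel k V) (Or.inr (Or.inr ⟨f, v, rfl, rfl⟩))

def symActionOnWeylGen : (V × Module.Dual k V) →ₗ[k] Module.End k (WeylAlg k V) where
  toFun x := LinearMap.mulRight k (πW (genV k V x.1)) + LinearMap.mulLeft k (πW (genD k V x.2))
  map_add' x y := by
    ext u
    simp only [Prod.fst_add, Prod.snd_add, genV_eq, genD_eq, map_add, LinearMap.add_apply,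
      LinearMap.mulRight_apply, LinearMap.mulLeft_apply, mul_add, add_mul]
    abel
  map_smul' c x := by
    ext u
    simp [genV_eq, genD_eq]

theorem symActionOnWeylGen_apply (x : V × Module.Dual k V) (u : WeylAlg k V) :
    symActionOnWeylGen x u = u * πW (genV k V x.1) + πW (genD k V x.2) * u :=
  rfl

def symActionOnWeyl : SymVD k V →ₐ[k] Module.End k (WeylAlg k V) :=
  RingQuot.liftAlgHom k ⟨TensorAlgebra.lift k symActionOnWeylGen, by
    rintro _ _ ⟨x, y, rfl, rfl⟩
    ext u
    simp only [map_mul, Module.End.mul_apply, TensorAlgebra.lift_ι_apply,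
      symActionOnWeylGen_apply, mul_add, add_mul, mul_assoc]
    rw [weyl_genV_mul_comm, ← mul_assoc _ _ u, weyl_genD_mul_comm, mul_assoc]
    abel⟩

theorem symActionOnWeyl_mk_genD (f : Module.Dual k V) :
    symActionOnWeyl (πS (genD k V f)) = Algebra.lmul k (WeylAlg k V) (πW (genD k V f)) := by
  ext u
  simp [symActionOnWeyl, genD, symActionOnWeylGen_apply, genV_zero]

theorem symActionOnWeyl_mk_genV_sub_mem (v : V) (m : ℕ) (u : WeylAlg k V)
    (hu : u ∈ filtImage πW m) :
    symActionOnWeyl (πS (genV k V v)) u - πW (genV k V v) * u ∈ filtImage πW m := by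
  let δ := LinearMap.mulRight k (πW (genV k V v)) - LinearMap.mulLeft k (πW (genV k V v))
  have h : symActionOnWeyl (πS (genV k V v)) u - πW (genV k V v) * u = δ u := by
    simp [δ, symActionOnWeyl, genV, symActionOnWeylGen_apply, genD_zero]
  rw [h]
  refine map_le_filtImage_of_leibniz δ (fun a b => ?_) (fun w => ?_) (fun f => ?_) m
    (Submodule.mem_map_of_mem hu)
  · simp only [δ, LinearMap.sub_apply, LinearMap.mulRight_apply, LinearMap.mulLeft_apply,
      mul_sub, sub_mul, mul_assoc]
    abel
  · simp [δ, weyl_genV_mul_comm]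
  · simpa [δ, weyl_genD_mul_genV] using algebraMap_mem_filtImage_zero (π := πW) (f v)

end Weyl

end

/-- **PBW for differential operators**: the natural surjection
`S(V ⊕ V^*) → gr D(V)` is an isomorphism: for every `n`, an element of filtration
degree `n+1` of the tensor algebra maps into filtration degree `n` of `D(V)` if
and only if it does so in `S(V ⊕ V^*)`. -/
theorem pbw_weyl_algebra (n : ℕ) (x : TVD k V) (hx : x ∈ filtT k V (n + 1)) :
    (RingQuot.mkAlgHom k (weylRel k V)) x ∈ filtW k V n ↔
      (RingQuot.mkAlgHom k (symRelW k V)) x ∈ filtS k V n :=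
  ⟨mem_filtImage_of_action weylActionOnSym weylActionOnSym_mk_genD
      weylActionOnSym_mk_genV_sub_mem hx,
    mem_filtImage_of_action symActionOnWeyl symActionOnWeyl_mk_genD
      symActionOnWeyl_mk_genV_sub_mem hx⟩

end
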